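/- Let K be a filtered category and let (fᵏ : Aᵏ → Bᵏ)_{k∈K} be a diagram in the arrow category of ∞-categories (or of ordinary categories) such that each fᵏ is cofinal (final). Then the induced functor on colimits colim_k Aᵏ → colim_k Bᵏ is cofinal. -/

import Mathlib

/-!
Objects and morphisms of a filtered colimit of categories are represented at some stage, and two
representatives that agree in the colimit already agree at a later stage. Hence an object `b` of
`colim B` comes from some `b' : Bᵐ`, and every object `(a, u : b ⟶ G a)` of the comma category
`b / G` is, up to isomorphism, the image of an object of `b' / fᵐ` for `m` large enough; pushing
further along the diagram preserves this. Any two objects of `b / G` therefore come from one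
comma category `b' / fᵐ`, which is connected because `fᵐ` is final, and the comparison functor
carries a zigzag there to a zigzag in `b / G`.
-/

open CategoryTheory CategoryTheory.Limits

namespace CategoryTheory

lemma WideSubcategory.functor_ext {C : Type*} [Category C] {D : Type*} [Category D]
    {P : MorphismProperty D} [P.IsMultiplicative] {G H : C ⥤ WideSubcategory P}
    (h : G ⋙ wideSubcategoryInclusion P = H ⋙ wideSubcategoryInclusion P) : G = H :=
  Functor.ext (fun x => WideSubcategory.ext (Functor.congr_obj h x)) fun _ _ f =>
    (wideSubcategoryInclusion P).map_injective <| by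
      rw [Functor.map_comp, Functor.map_comp, eqToHom_map, eqToHom_map]
      exact Functor.congr_hom h f

namespace Cat

universe u' v' u v

section Colimits

variable {J : Type u} [Category.{v} J] {F : J ⥤ Cat.{v', u'}}

lemma ι_obj_map_obj (c : Cocone F) {i j : J} (g : i ⟶ j) (x : F.obj i) :
    (c.ι.app j).toFunctor.obj ((F.map g).toFunctor.obj x) = (c.ι.app i).toFunctor.obj x :=
  Functor.congr_obj (congrArg Hom.toFunctor (c.w g)) x

lemma ι_map_map_map (c : Cocone F) {i j : J} (g : i ⟶ j) {x y : F.obj i} (φ : x ⟶ y) :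
    (c.ι.app j).toFunctor.map ((F.map g).toFunctor.map φ) =
      eqToHom (ι_obj_map_obj c g x) ≫ (c.ι.app i).toFunctor.map φ ≫
        eqToHom (ι_obj_map_obj c g y).symm :=
  Functor.congr_hom (congrArg Hom.toFunctor (c.w g)) φ

lemma hom_ext_of_codiscrete {C : Cat.{v', u'}} {X : Type u'}
    {G H : C ⟶ Cat.of (ULiftHom.{v'} (Codiscrete X))}
    (h : ∀ x, G.toFunctor.obj x = H.toFunctor.obj x) : G = H :=
  Hom.ext <| Functor.ext h fun _ _ _ => ULift.ext _ _ rfl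

def codiscreteCocone (s : Cocone (F ⋙ objects)) : Cocone F where
  pt := of (ULiftHom.{v'} (Codiscrete s.pt))
  ι :=
    { app j := (Codiscrete.functor (C := F.obj j) (s.ι.app j) ⋙ ULiftHom.up).toCatHom
      naturality _ _ g := hom_ext_of_codiscrete
        fun x => congrArg Codiscrete.mk (types_congr_hom (s.w g) x) }

/-- A functor into a codiscrete category is just a map of objects, so `codiscreteCocone` turns
cocones of object sets into cocones in `Cat`. -/
def isColimitMapCoconeObjects {c : Cocone F} (hc : IsColimit c) :
    IsColimit (objects.mapCocone c) where
  desc s := ↾fun p => ((hc.desc (codiscreteCocone s)).toFunctor.obj p).as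
  fac s j := by
    ext x
    exact congrArg Codiscrete.as
      (Functor.congr_obj (congrArg Hom.toFunctor (hc.fac (codiscreteCocone s) j)) x)
  uniq s m hm := by
    have := hc.uniq (codiscreteCocone s)
      (Codiscrete.functor (C := c.pt) (fun p => m p) ⋙ ULiftHom.up).toCatHom
      fun j => hom_ext_of_codiscrete fun x => congrArg Codiscrete.mk (types_congr_hom (hm j) x)
    ext p
    exact congrArg Codiscrete.as (Functor.congr_obj (congrArg Hom.toFunctor this) p)

lemma exists_ι_obj_eq {c : Cocone F} (hc : IsColimit c) (p : c.pt) :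
    ∃ (j : J) (x : F.obj j), (c.ι.app j).toFunctor.obj x = p :=
  Types.jointly_surjective _ (isColimitMapCoconeObjects hc) p

lemma exists_map_obj_eq_of_ι_obj_eq [IsFiltered J] {c : Cocone F} (hc : IsColimit c)
    {i j : J} {x : F.obj i} {y : F.obj j}
    (h : (c.ι.app i).toFunctor.obj x = (c.ι.app j).toFunctor.obj y) :
    ∃ (k : J) (s : i ⟶ k) (t : j ⟶ k), (F.map s).toFunctor.obj x = (F.map t).toFunctor.obj y :=
  (Types.FilteredColimit.isColimit_eq_iff _ (isColimitMapCoconeObjects hc)).mp h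

/-- The legs of `c` lift to the wide subcategory of `P`; by the universal property the lifted
cocone gives a section of its inclusion, so every morphism lies in `P`. -/
lemma morphismProperty_eq_top_of_isColimit {c : Cocone F} (hc : IsColimit c)
    (P : MorphismProperty c.pt) [P.IsMultiplicative]
    (hP : ∀ j {x y : F.obj j} (φ : x ⟶ y), P ((c.ι.app j).toFunctor.map φ)) : P = ⊤ := by
  let L (j : J) : F.obj j ⥤ WideSubcategory P :=
    { obj x := ⟨(c.ι.app j).toFunctor.obj x⟩
      map φ := ⟨_, hP j φ⟩ }
  let lift : Cocone F :=
    { pt := of (WideSubcategory P)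
      ι :=
        { app j := (L j).toCatHom
          naturality _ _ g := Hom.ext <| WideSubcategory.functor_ext <|
            congrArg Hom.toFunctor (c.w g) } }
  have hR : hc.desc lift ≫ (wideSubcategoryInclusion P).toCatHom = 𝟙 c.pt :=
    hc.hom_ext fun j => by rw [← Category.assoc, hc.fac]; rfl
  ext p q u
  simp only [MorphismProperty.top_apply, iff_true]
  have hR' := congrArg Hom.toFunctor hR
  exact P.of_eq ((hc.desc lift).toFunctor.map u).2 (Functor.congr_obj hR' p)
    (Functor.congr_obj hR' q) (Functor.congr_hom hR'.symm u)

def stageHoms (c : Cocone F) : MorphismProperty c.pt := fun p q u =>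
  ∃ (j : J) (x y : F.obj j) (φ : x ⟶ y) (hx : (c.ι.app j).toFunctor.obj x = p)
    (hy : (c.ι.app j).toFunctor.obj y = q),
    u = eqToHom hx.symm ≫ (c.ι.app j).toFunctor.map φ ≫ eqToHom hy

variable [IsFiltered J] {c : Cocone F}

lemma stageHoms_isMultiplicative (hc : IsColimit c) : (stageHoms c).IsMultiplicative where
  id_mem p := by
    obtain ⟨j, x, rfl⟩ := exists_ι_obj_eq hc p
    exact ⟨j, x, x, 𝟙 x, rfl, rfl, by simp⟩
  comp_mem {p q r} u v := by
    rintro ⟨i, x, y, φ, rfl, rfl, rfl⟩ ⟨j, y', z, ψ, hy, rfl, rfl⟩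
    obtain ⟨k, s, t, hst⟩ := exists_map_obj_eq_of_ι_obj_eq hc hy.symm
    refine ⟨k, (F.map s).toFunctor.obj x, (F.map t).toFunctor.obj z,
      (F.map s).toFunctor.map φ ≫ eqToHom hst ≫ (F.map t).toFunctor.map ψ,
      ι_obj_map_obj c s x, ι_obj_map_obj c t z, ?_⟩
    simp [ι_map_map_map, eqToHom_map]

lemma stageHoms_eq_top (hc : IsColimit c) : stageHoms c = ⊤ :=
  have := stageHoms_isMultiplicative hc
  morphismProperty_eq_top_of_isColimit hc _ fun j x y φ => ⟨j, x, y, φ, rfl, rfl, by simp⟩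

lemma exists_eq_ι_map (hc : IsColimit c) {i j : J} {x : F.obj i} {y : F.obj j}
    (u : (c.ι.app i).toFunctor.obj x ⟶ (c.ι.app j).toFunctor.obj y) :
    ∃ (k : J) (s : i ⟶ k) (t : j ⟶ k) (φ : (F.map s).toFunctor.obj x ⟶ (F.map t).toFunctor.obj y),
      u = eqToHom (ι_obj_map_obj c s x).symm ≫ (c.ι.app k).toFunctor.map φ ≫
        eqToHom (ι_obj_map_obj c t y) := by
  obtain ⟨l, x', y', φ, hx, hy, rfl⟩ : stageHoms c u := by simp [stageHoms_eq_top hc]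
  obtain ⟨n₁, a, b, hab⟩ := exists_map_obj_eq_of_ι_obj_eq hc hx
  obtain ⟨n₂, a', b', hab'⟩ := exists_map_obj_eq_of_ι_obj_eq hc hy
  obtain ⟨k, α, γ, hαγ⟩ := IsFiltered.span a a'
  have hx' : (F.map (b ≫ α)).toFunctor.obj x = (F.map (a ≫ α)).toFunctor.obj x' := by
    simp only [Functor.map_comp, Hom.comp_obj, hab]
  have hy' : (F.map (a ≫ α)).toFunctor.obj y' = (F.map (b' ≫ γ)).toFunctor.obj y := by
    simp only [hαγ, Functor.map_comp, Hom.comp_obj, hab']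
  refine ⟨k, b ≫ α, b' ≫ γ, eqToHom hx' ≫ (F.map (a ≫ α)).toFunctor.map φ ≫ eqToHom hy', ?_⟩
  simp [ι_map_map_map, eqToHom_map]

end Colimits

section Final

variable {K : Type u} [Category.{v} K] {A B : K ⥤ Cat.{v', u'}} (f : A ⟶ B)
  {cA : Cocone A} {cB : Cocone B} {G : cA.pt ⟶ cB.pt}
  (hG : ∀ k, cA.ι.app k ≫ G = f.app k ≫ cB.ι.app k)

/-- With `α` presenting `b` at stage `m`, this sends `(a, v : b' ⟶ fᵐ a)` to
`(ι a, α ≫ ι v : b ⟶ G (ι a))`. -/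
def stageFunctor {m : K} {b : cB.pt} {b' : B.obj m} (α : b ⟶ (cB.ι.app m).toFunctor.obj b') :
    StructuredArrow b' (f.app m).toFunctor ⥤ StructuredArrow b G.toFunctor :=
  StructuredArrow.map₂ α (eqToHom (congrArg Hom.toFunctor (hG m)).symm)

def structuredArrowPush {m m' : K} (t : m ⟶ m') (b' : B.obj m) :
    StructuredArrow b' (f.app m).toFunctor ⥤
      StructuredArrow ((B.map t).toFunctor.obj b') (f.app m').toFunctor :=
  StructuredArrow.map₂ (G := (B.map t).toFunctor) (F := (A.map t).toFunctor) (𝟙 _)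
    (eqToHom (congrArg Hom.toFunctor (f.naturality t)).symm)

def stageFunctorIsoPushComp {m m' : K} (t : m ⟶ m') {b : cB.pt} {b' : B.obj m}
    (α : b ⟶ (cB.ι.app m).toFunctor.obj b') :
    stageFunctor f hG α ≅ structuredArrowPush f t b' ⋙
      stageFunctor f hG (α ≫ eqToHom (ι_obj_map_obj cB t b').symm) :=
  (StructuredArrow.map₂CompMap₂Iso _ _ _ _ ≪≫
    StructuredArrow.map₂Congr _ _ (eqToIso (congrArg Hom.toFunctor (cA.w t)))
      (eqToIso (congrArg Hom.toFunctor (cB.w t))) _ _ (hβ := by ext; simp [eqToHom_map])).symm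

lemma exists_iso_stageFunctor_obj [IsFiltered K] (hA : IsColimit cA) (hB : IsColimit cB)
    {m : K} {b : cB.pt} {b' : B.obj m} (α : b ⟶ (cB.ι.app m).toFunctor.obj b') [IsIso α]
    (X : StructuredArrow b G.toFunctor) :
    ∃ (m' : K) (t : m ⟶ m')
      (j : StructuredArrow ((B.map t).toFunctor.obj b') (f.app m').toFunctor),
      Nonempty ((stageFunctor f hG (α ≫ eqToHom (ι_obj_map_obj cB t b').symm)).obj j ≅ X) := by
  obtain ⟨a, u, rfl⟩ := StructuredArrow.mk_surjective X
  obtain ⟨k, a, rfl⟩ := exists_ι_obj_eq hA a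
  have hGa : G.toFunctor.obj ((cA.ι.app k).toFunctor.obj a) =
      (cB.ι.app k).toFunctor.obj ((f.app k).toFunctor.obj a) :=
    Functor.congr_obj (congrArg Hom.toFunctor (hG k)) a
  obtain ⟨m', s, t, φ, hφ⟩ := exists_eq_ι_map hB (x := b') (y := (f.app k).toFunctor.obj a)
    (inv α ≫ u ≫ eqToHom hGa)
  have hf := Functor.congr_obj (congrArg Hom.toFunctor (f.naturality t)).symm a
  refine ⟨m', s, StructuredArrow.mk (φ ≫ eqToHom hf),
    ⟨StructuredArrow.isoMk (eqToIso (ι_obj_map_obj cA t a)) ?_⟩⟩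
  have hu : u = α ≫ (inv α ≫ u ≫ eqToHom hGa) ≫ eqToHom hGa.symm := by simp
  rw [hu, hφ]
  simp [stageFunctor, eqToHom_map]

end Final

end Cat

end CategoryTheory

open CategoryTheory.Cat in
/-- A filtered colimit of final (cofinal) functors is final: given a filtered
diagram of arrows `fᵏ : Aᵏ → Bᵏ` in `Cat` (i.e. a natural transformation
`f : A ⟶ B` of filtered diagrams of categories), each of whose components is
final, the induced functor `colim A ⟶ colim B` between the colimits is
final. -/
theorem filtered_colimit_of_final_is_final
    {K : Type u} [Category.{v} K] [IsFiltered K]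
    (A B : K ⥤ Cat.{v₂, u₂}) (f : A ⟶ B)
    (hf : ∀ k : K, (f.app k).toFunctor.Final)
    (cA : Cocone A) (cB : Cocone B)
    (hA : IsColimit cA) (_ : IsColimit cB) :
    (hA.desc (Cocone.mk cB.pt (f ≫ cB.ι))).toFunctor.Final := by
  have hB : IsColimit cB := ‹_›
  have hG : ∀ k, cA.ι.app k ≫ hA.desc (Cocone.mk cB.pt (f ≫ cB.ι)) = f.app k ≫ cB.ι.app k :=
    hA.fac _
  refine ⟨fun b => ?_⟩
  obtain ⟨k, b', rfl⟩ := exists_ι_obj_eq hB b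
  have := (hf k).out b'
  have : Nonempty (StructuredArrow ((cB.ι.app k).toFunctor.obj b') _) :=
    ⟨(stageFunctor f hG (𝟙 _)).obj (Classical.arbitrary _)⟩
  refine zigzag_isConnected fun X₁ X₂ => ?_
  obtain ⟨m₁, t₁, j₁, ⟨e₁⟩⟩ := exists_iso_stageFunctor_obj f hG hA hB (𝟙 _) X₁
  obtain ⟨m₂, t₂, j₂, ⟨e₂⟩⟩ := exists_iso_stageFunctor_obj f hG hA hB
    (𝟙 _ ≫ eqToHom (ι_obj_map_obj cB t₁ b').symm) X₂
  have := (hf m₂).out ((B.map t₂).toFunctor.obj ((B.map t₁).toFunctor.obj b'))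
  exact (Zigzag.of_hom e₁.inv).trans <|
    (Zigzag.of_hom ((stageFunctorIsoPushComp f hG t₂ _).hom.app j₁)).trans <|
    (zigzag_obj_of_zigzag _ (isPreconnected_zigzag _ j₂)).trans (Zigzag.of_hom e₂.hom)
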